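/- arXiv:1701.01361 — 4 statements merged into one kernel-verified Lean document; each statement's English description precedes it below -/
import Mathlib

section
/- The map (m,n) ↦ z_{m,n} from ℤ² to the cover of a phyllotactic tiling is injective: if z_{m,n} = z_{m',n'} then m = m' and n = n'. -/
/-!
Moving along a down vector lowers the height strictly and never moves left, while moving
along an up vector moves strictly right and never lowers the height. So if `z m n = z m' n'`
with `n < n'`, the horizontal coordinates force `m' < m`, and then the heights cannot agree;
hence `n = n'`, and the strict monotonicity of the heights of the down partial sums gives `m = m'`.
-/

/-- Cyclic partial sum: `csum d m = d 1 + ⋯ + d m` for `m > 0`, `0` for `m = 0`,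
and `-(d (m+1) + ⋯ + d 0)` for `m < 0`. -/
noncomputable def csum (d : ℤ → ℝ × ℝ) (m : ℤ) : ℝ × ℝ :=
  (∑ j ∈ Finset.Icc 1 m, d j) - (∑ j ∈ Finset.Icc (m + 1) 0, d j)

/-- Points of the cover of a phyllotactic tiling. -/
noncomputable def zpt (a b : ℝ) (d u : ℤ → ℝ × ℝ) (m n : ℤ) : ℝ × ℝ :=
  ((a, b) : ℝ × ℝ) + csum d m + csum u n

/-- Projection from the plane to the cylinder `(ℝ/ℤ) × ℝ`. -/
noncomputable def pii (p : ℝ × ℝ) : AddCircle (1 : ℝ) × ℝ := ((p.1 : AddCircle (1 : ℝ)), p.2)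

open Finset

lemma csum_add_one (f : ℤ → ℝ × ℝ) (m : ℤ) : csum f (m + 1) = csum f m + f (m + 1) := by
  unfold csum
  rcases le_or_gt 0 m with hm | hm
  · have hIcc : Icc 1 (m + 1) = insert (m + 1) (Icc 1 m) := by ext; simp; omega
    rw [hIcc, sum_insert (by simp), Icc_eq_empty (a := m + 1 + 1) (by omega),
      Icc_eq_empty (a := m + 1) (by omega)]
    abel
  · have hIcc : Icc (m + 1) 0 = insert (m + 1) (Icc (m + 1 + 1) 0) := by ext; simp; omega
    rw [hIcc, sum_insert (by simp), Icc_eq_empty (b := m + 1) (by omega),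
      Icc_eq_empty (b := m) (by omega)]
    abel

section

variable {ι κ α β : Type*} [LinearOrder ι] [LinearOrder κ]
  [AddCommMonoid α] [LinearOrder α] [IsOrderedCancelAddMonoid α]
  [AddCommMonoid β] [LinearOrder β] [IsOrderedCancelAddMonoid β]

theorem injective_add_of_monotone {f : ι → α × β} {g : κ → α × β}
    (hf₁ : Monotone fun m => (f m).1) (hf₂ : StrictAnti fun m => (f m).2)
    (hg₁ : StrictMono fun n => (g n).1) (hg₂ : Monotone fun n => (g n).2) :
    Function.Injective fun p : ι × κ => f p.1 + g p.2 := by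
  have no_lt : ∀ {m m' : ι} {n n' : κ}, f m + g n = f m' + g n' → ¬ n < n' := by
    intro m m' n n' h hn
    have hm : m' < m := lt_of_not_ge fun hm =>
      (add_lt_add_of_le_of_lt (hf₁ hm) (hg₁ hn)).ne (congrArg Prod.fst h)
    exact (add_lt_add_of_lt_of_le (hf₂ hm) (hg₂ hn.le)).ne (congrArg Prod.snd h)
  rintro ⟨m, n⟩ ⟨m', n'⟩ (h : f m + g n = f m' + g n')
  obtain rfl : n = n' := le_antisymm (not_lt.1 (no_lt h.symm)) (not_lt.1 (no_lt h))
  obtain rfl : m = m' := hf₂.injective (add_right_cancel (congrArg Prod.snd h))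
  rfl

end

theorem tiling_cover_injective_general
    (a b : ℝ) (d u : ℤ → ℝ × ℝ)
    (hd : ∀ j : ℤ, 0 ≤ (d j).1 ∧ (d j).2 < 0)
    (hu : ∀ i : ℤ, 0 < (u i).1 ∧ 0 ≤ (u i).2) :
    ∀ m n m' n' : ℤ, zpt a b d u m n = zpt a b d u m' n' → m = m' ∧ n = n' := by
  have hinj : Function.Injective fun p : ℤ × ℤ => csum d p.1 + csum u p.2 := by
    refine injective_add_of_monotone ?_ ?_ ?_ ?_
    · exact monotone_int_of_le_succ fun m => by
        simpa only [csum_add_one, Prod.fst_add] using le_add_of_nonneg_right (hd (m + 1)).1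
    · exact strictAnti_int_of_succ_lt fun m => by
        simpa only [csum_add_one, Prod.snd_add] using add_lt_of_neg_right _ (hd (m + 1)).2
    · exact strictMono_int_of_lt_succ fun n => by
        simpa only [csum_add_one, Prod.fst_add] using lt_add_of_pos_right _ (hu (n + 1)).1
    · exact monotone_int_of_le_succ fun n => by
        simpa only [csum_add_one, Prod.snd_add] using le_add_of_nonneg_right (hu (n + 1)).2
  intro m n m' n' h
  have hsum : csum d m + csum u n = csum d m' + csum u n' := by
    simpa only [zpt, add_assoc, add_right_inj] using h
  exact Prod.ext_iff.1 (@hinj (m, n) (m', n') hsum)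

/-- The map `(m,n) ↦ z m n` from `ℤ²` to the cover of a phyllotactic tiling
is injective. -/
theorem tiling_cover_injective
    (M N : ℕ) (hM : 0 < M) (hN : 0 < N) (a b : ℝ) (d u : ℤ → ℝ × ℝ)
    (hdper : ∀ j : ℤ, d (j + M) = d j) (huper : ∀ i : ℤ, u (i + N) = u i)
    (hd : ∀ j : ℤ, 0 ≤ (d j).1 ∧ (d j).2 < 0)
    (hu : ∀ i : ℤ, 0 < (u i).1 ∧ 0 ≤ (u i).2)
    (hsum : (∑ j ∈ Finset.Icc (1 : ℤ) (M : ℤ), d j)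
        + (∑ i ∈ Finset.Icc (1 : ℤ) (N : ℤ), u i) = ((1 : ℝ), (0 : ℝ))) :
    ∀ m n m' n' : ℤ, zpt a b d u m n = zpt a b d u m' n' → m = m' ∧ n = n' :=
  tiling_cover_injective_general a b d u hd hu
end

section
/- Let L̃ = {m·v + (n,0) : m,n ∈ ℤ} be the cover of a helical lattice and suppose N·Δ_M − M·Δ_N = 1 for the two closest vectors z_M = M·v + (Δ_M,0) and z_N = N·v + (Δ_N,0). Then on the cylinder the left parastichies (cosets of the subgroup generated by z_M in the lattice) are exactly M in number: the cosets j·z_N + ⟨z_M⟩ for j = 0,...,M−1 partition the lattice and j·z_N + ⟨z_M⟩ projects to the same parastichy as (j+M)·z_N + ⟨z_M⟩. -/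
def parastichy (p z : ℝ × ℝ) : Set (AddCircle (1 : ℝ) × ℝ) :=
  pii '' {q | ∃ k : ℤ, q = p + k • z}

lemma pii_add_unit_fst (p : ℝ × ℝ) : pii (p + ((1 : ℝ), (0 : ℝ))) = pii p :=
  Prod.ext (AddCircle.coe_add_period 1 p.1) (add_zero p.2)

lemma parastichy_add_unit_fst (p z : ℝ × ℝ) :
    parastichy (p + ((1 : ℝ), (0 : ℝ))) z = parastichy p z := by
  have hshift : {q | ∃ k : ℤ, q = p + ((1 : ℝ), (0 : ℝ)) + k • z}
      = (· + ((1 : ℝ), (0 : ℝ))) '' {q | ∃ k : ℤ, q = p + k • z} := by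
    ext q
    simp only [Set.mem_ofPred_eq, Set.mem_image]
    constructor
    · rintro ⟨k, rfl⟩
      exact ⟨p + k • z, ⟨k, rfl⟩, by abel⟩
    · rintro ⟨_, ⟨k, rfl⟩, rfl⟩
      exact ⟨k, by abel⟩
  simp only [parastichy, hshift, Set.image_image, pii_add_unit_fst]

lemma parastichy_add_zsmul (p z : ℝ × ℝ) (c : ℤ) : parastichy (p + c • z) z = parastichy p z := by
  have hreindex : {q | ∃ k : ℤ, q = p + c • z + k • z} = {q | ∃ k : ℤ, q = p + k • z} := by
    ext q
    simp only [Set.mem_ofPred_eq]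
    constructor
    · rintro ⟨k, rfl⟩
      exact ⟨c + k, by rw [add_zsmul, add_assoc]⟩
    · rintro ⟨k, rfl⟩
      exact ⟨k - c, by rw [sub_zsmul]; abel⟩
  rw [parastichy, hreindex, parastichy]

lemma smul_zN_add_unit_fst_eq_smul_zM {M N ΔM ΔN : ℤ} {v zM zN : ℝ × ℝ}
    (hzM : zM = M • v + (((ΔM : ℝ), (0 : ℝ)) : ℝ × ℝ))
    (hzN : zN = N • v + (((ΔN : ℝ), (0 : ℝ)) : ℝ × ℝ))
    (hdet : N * ΔM - M * ΔN = 1) :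
    M • zN + ((1 : ℝ), (0 : ℝ)) = N • zM := by
  have hdetR : (N : ℝ) * ΔM - M * ΔN = 1 := by exact_mod_cast hdet
  subst hzM hzN
  obtain ⟨v₁, v₂⟩ := v
  simp only [Prod.smul_mk, Prod.mk_add_mk, zsmul_eq_mul, Prod.mk.injEq]
  constructor
  · linear_combination -hdetR
  · ring

lemma eq_of_mul_add_mul_eq_mul_add_mul {M N j j' k k' : ℤ} (hcop : IsCoprime M N)
    (hj : 0 ≤ j ∧ j < M) (hj' : 0 ≤ j' ∧ j' < M) (h : j * N + k * M = j' * N + k' * M) :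
    j = j' := by
  have hdvd : M ∣ (j - j') * N := ⟨k' - k, by linear_combination h⟩
  have hzero := Int.eq_zero_of_abs_lt_dvd (hcop.dvd_of_dvd_mul_right hdvd)
    (abs_lt.mpr ⟨by omega, by omega⟩)
  omega

lemma existsUnique_residue_eq_mul_add_mul {M N : ℤ} (hM : 0 < M) (hcop : IsCoprime M N)
    (m : ℤ) : ∃! j : ℤ, 0 ≤ j ∧ j < M ∧ ∃ k : ℤ, m = j * N + k * M := by
  obtain ⟨a, b, hab⟩ := hcop
  have hbound : 0 ≤ m * b % M ∧ m * b % M < M :=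
    ⟨Int.emod_nonneg _ hM.ne', Int.emod_lt_of_pos _ hM⟩
  -- `b` inverts `N` modulo `M`, so `j = m * b mod M`
  have hm : m = m * b % M * N + (m * b / M * N + m * a) * M := by
    linear_combination (-m) * hab - N * Int.emod_add_mul_ediv (m * b) M
  refine ⟨m * b % M, ⟨hbound.1, hbound.2, _, hm⟩, ?_⟩
  rintro j ⟨hj0, hjM, k, hk⟩
  exact eq_of_mul_add_mul_eq_mul_add_mul ⟨a, b, hab⟩ ⟨hj0, hjM⟩ hbound (hk.symm.trans hm)

theorem left_parastichies_count_general
    (M N ΔM ΔN : ℤ) (hM : 0 < M) (v zM zN : ℝ × ℝ)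
    (hzM : zM = M • v + (((ΔM : ℝ), (0 : ℝ)) : ℝ × ℝ))
    (hzN : zN = N • v + (((ΔN : ℝ), (0 : ℝ)) : ℝ × ℝ))
    (hdet : N * ΔM - M * ΔN = 1) :
    (∀ j : ℤ,
        pii '' {p : ℝ × ℝ | ∃ k : ℤ, p = (j + M) • zN + k • zM}
          = pii '' {p : ℝ × ℝ | ∃ k : ℤ, p = j • zN + k • zM}) ∧
    (∀ m n : ℤ, ∃! j : ℤ, 0 ≤ j ∧ j < M ∧
        ∃ k t : ℤ, m = j * N + k * M ∧ n = j * ΔN + k * ΔM + t) := by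
  have hperiod := smul_zN_add_unit_fst_eq_smul_zM hzM hzN hdet
  refine ⟨fun j => ?_, fun m n => ?_⟩
  · change parastichy ((j + M) • zN) zM = parastichy (j • zN) zM
    rw [← parastichy_add_unit_fst, add_zsmul, add_assoc, hperiod, parastichy_add_zsmul]
  · have hcop : IsCoprime M N := ⟨-ΔN, ΔM, by linear_combination hdet⟩
    obtain ⟨j, ⟨hj0, hjM, k, hk⟩, hunique⟩ := existsUnique_residue_eq_mul_add_mul hM hcop m
    refine ⟨j, ⟨hj0, hjM, k, n - j * ΔN - k * ΔM, hk, by ring⟩, ?_⟩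
    rintro j' ⟨hj'0, hj'M, k', -, hk', -⟩
    exact hunique j' ⟨hj'0, hj'M, k', hk'⟩

/-- For a helical lattice with cover `{m•v + (n,0)}` and closest vectors
`z_M = M•v + (Δ_M,0)`, `z_N = N•v + (Δ_N,0)` with `N·Δ_M − M·Δ_N = 1`, the
cosets `j•z_N + ⟨z_M⟩` for `j = 0,…,M−1` partition the lattice (each lattice
point `m•v + (n,0)` lies, at the level of indices, in exactly one such coset,
up to horizontal integer translation), and on the cylinder the coset for `j+M`
projects to the same parastichy as the coset for `j`. Hence there are exactly
`M` left parastichies. -/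
theorem left_parastichies_count
    (M N ΔM ΔN : ℤ) (hM : 0 < M) (hN : 0 < N) (v zM zN : ℝ × ℝ)
    (hzM : zM = M • v + (((ΔM : ℝ), (0 : ℝ)) : ℝ × ℝ))
    (hzN : zN = N • v + (((ΔN : ℝ), (0 : ℝ)) : ℝ × ℝ))
    (hdet : N * ΔM - M * ΔN = 1) :
    (∀ j : ℤ,
        pii '' {p : ℝ × ℝ | ∃ k : ℤ, p = (j + M) • zN + k • zM}
          = pii '' {p : ℝ × ℝ | ∃ k : ℤ, p = j • zN + k • zM}) ∧
    (∀ m n : ℤ, ∃! j : ℤ, 0 ≤ j ∧ j < M ∧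
        ∃ k t : ℤ, m = j * N + k * M ∧ n = j * ΔN + k * ΔM + t) :=
  left_parastichies_count_general M N ΔM ΔN hM v zM zN hzM hzN hdet
end

section
/- A phyllotactic tiling is a multilattice: its cover T̃ equals the union over m ∈ {1,...,M}, n ∈ {1,...,N} of translates v_{m,n} + Λ, where Λ is the lattice generated by U = ∑_{i=1}^N u_i and D = ∑_{j=1}^M d_j, and v_{m,n} = (a,b) + ∑_{j=1}^m d_j + ∑_{i=1}^n u_i. -/
lemma csum_succ (d : ℤ → ℝ × ℝ) (m : ℤ) : csum d (m + 1) = csum d m + d (m + 1) := by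
  unfold csum
  rcases le_or_gt 0 m with h | h
  · rw [show Finset.Icc (1:ℤ) (m+1) = insert (m+1) (Finset.Icc 1 m) from by
        ext x; simp; omega,
      Finset.sum_insert (by simp),
      Finset.Icc_eq_empty (by omega : ¬ (m + 1 + 1 ≤ (0:ℤ))),
      Finset.Icc_eq_empty (by omega : ¬ (m + 1 ≤ (0:ℤ)))]
    abel
  · rw [Finset.Icc_eq_empty (by omega : ¬ ((1:ℤ) ≤ m + 1)),
      Finset.Icc_eq_empty (by omega : ¬ ((1:ℤ) ≤ m)),
      Finset.Icc_eq_cons_Ioc (by omega : m + 1 ≤ (0:ℤ)), Finset.sum_cons,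
      show Finset.Ioc (m+1) 0 = Finset.Icc (m+1+1) 0 from by ext x; simp]
    abel

lemma csum_zero (d : ℤ → ℝ × ℝ) : csum d 0 = 0 := by
  simp [csum]

lemma csum_shift (d : ℤ → ℝ × ℝ) (M : ℕ) (hM : 0 < M)
    (hdper : ∀ j : ℤ, d (j + M) = d j) (m : ℤ) :
    csum d (m + M) = csum d m + ∑ j ∈ Finset.Icc (1 : ℤ) (M : ℤ), d j := by
  induction m using Int.induction_on with
  | zero =>
    rw [csum_zero, zero_add, zero_add]
    unfold csum
    rw [Finset.Icc_eq_empty (by omega : ¬ ((M:ℤ) + 1 ≤ 0))]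
    simp
  | succ k ih =>
    have : (k : ℤ) + 1 + M = (k + M) + 1 := by ring
    rw [this, csum_succ, ih, csum_succ]
    rw [show (k : ℤ) + M + 1 = (k + 1) + M by ring, hdper]
    abel
  | pred k ih =>
    have h1 : (-(k:ℤ) - 1 + M) + 1 = -(k:ℤ) + M := by ring
    have h2 : (-(k:ℤ) - 1) + 1 = -(k:ℤ) := by ring
    have e1 := csum_succ d (-(k:ℤ) - 1 + M)
    have e2 := csum_succ d (-(k:ℤ) - 1)
    rw [h1] at e1; rw [h2] at e2
    rw [ih, hdper, e2] at e1
    -- e1 : csum d (-k-1) + d (-k) + S = csum d (-k-1+M) + d (-k)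
    have key : csum d (-(k:ℤ) - 1 + M) + d (-(k:ℤ)) =
        (csum d (-(k:ℤ) - 1) + ∑ j ∈ Finset.Icc (1:ℤ) (M:ℤ), d j) + d (-(k:ℤ)) := by
      rw [← e1]; abel
    exact add_right_cancel key

lemma csum_mul (d : ℤ → ℝ × ℝ) (M : ℕ) (hM : 0 < M)
    (hdper : ∀ j : ℤ, d (j + M) = d j) (m k : ℤ) :
    csum d (m + k * M) = csum d m + k • ∑ j ∈ Finset.Icc (1 : ℤ) (M : ℤ), d j := by
  induction k using Int.induction_on with
  | zero => simp
  | succ n ih =>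
    rw [show m + ((n:ℤ) + 1) * M = (m + n * M) + M by ring,
      csum_shift d M hM hdper, ih, add_smul, one_smul]
    abel
  | pred n ih =>
    have h := csum_shift d M hM hdper (m + (-(n:ℤ) - 1) * M)
    rw [show m + (-(n:ℤ) - 1) * M + M = m + (-(n:ℤ)) * M by ring, ih] at h
    rw [eq_sub_of_add_eq h.symm, sub_smul, one_smul]
    abel

lemma csum_of_mem (d : ℤ → ℝ × ℝ) (m : ℤ) (hm : 1 ≤ m) :
    csum d m = ∑ j ∈ Finset.Icc 1 m, d j := by
  unfold csum
  rw [Finset.Icc_eq_empty (by omega : ¬ (m + 1 ≤ (0:ℤ)))]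
  simp

/-- A phyllotactic tiling is a multilattice: its cover equals the union over
`m ∈ {1,…,M}`, `n ∈ {1,…,N}` of translates `v_{m,n} + Λ`, where `Λ` is the
lattice generated by `U = ∑ u_i` and `D = ∑ d_j`, and
`v_{m,n} = (a,b) + ∑_{j=1}^m d_j + ∑_{i=1}^n u_i`. -/
theorem tiling_is_multilattice
    (M N : ℕ) (hM : 0 < M) (hN : 0 < N) (a b : ℝ) (d u : ℤ → ℝ × ℝ)
    (hdper : ∀ j : ℤ, d (j + M) = d j) (huper : ∀ i : ℤ, u (i + N) = u i)
    (hd : ∀ j : ℤ, 0 ≤ (d j).1 ∧ (d j).2 < 0)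
    (hu : ∀ i : ℤ, 0 < (u i).1 ∧ 0 ≤ (u i).2)
    (hsum : (∑ j ∈ Finset.Icc (1 : ℤ) (M : ℤ), d j)
        + (∑ i ∈ Finset.Icc (1 : ℤ) (N : ℤ), u i) = ((1 : ℝ), (0 : ℝ))) :
    {p : ℝ × ℝ | ∃ m n : ℤ, p = zpt a b d u m n}
      = {p : ℝ × ℝ | ∃ m ∈ Finset.Icc (1 : ℤ) (M : ℤ), ∃ n ∈ Finset.Icc (1 : ℤ) (N : ℤ),
          ∃ q r : ℤ,
            p = ((a, b) : ℝ × ℝ) + (∑ j ∈ Finset.Icc 1 m, d j) + (∑ i ∈ Finset.Icc 1 n, u i)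
              + q • (∑ i ∈ Finset.Icc (1 : ℤ) (N : ℤ), u i)
              + r • (∑ j ∈ Finset.Icc (1 : ℤ) (M : ℤ), d j)} := by
  ext p
  simp only [Set.mem_setOf_eq]
  constructor
  · rintro ⟨m, n, rfl⟩
    obtain ⟨m0, r, hm01, hm0M, rfl⟩ : ∃ m0 r : ℤ, 1 ≤ m0 ∧ m0 ≤ M ∧ m = m0 + r * M := by
      refine ⟨(m - 1) % M + 1, (m - 1) / M, ?_, ?_, ?_⟩
      · have := Int.emod_nonneg (m - 1) (show (M:ℤ) ≠ 0 by omega); omega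
      · have := Int.emod_lt_of_pos (m - 1) (show (0:ℤ) < M by omega); omega
      · have h : (m - 1) / M * M + (m - 1) % M = m - 1 := by
          rw [mul_comm]; exact Int.mul_ediv_add_emod _ _
        omega
    obtain ⟨n0, q, hn01, hn0N, rfl⟩ : ∃ n0 q : ℤ, 1 ≤ n0 ∧ n0 ≤ N ∧ n = n0 + q * N := by
      refine ⟨(n - 1) % N + 1, (n - 1) / N, ?_, ?_, ?_⟩
      · have := Int.emod_nonneg (n - 1) (show (N:ℤ) ≠ 0 by omega); omega
      · have := Int.emod_lt_of_pos (n - 1) (show (0:ℤ) < N by omega); omega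
      · have h : (n - 1) / N * N + (n - 1) % N = n - 1 := by
          rw [mul_comm]; exact Int.mul_ediv_add_emod _ _
        omega
    refine ⟨m0, Finset.mem_Icc.mpr ⟨hm01, hm0M⟩, n0, Finset.mem_Icc.mpr ⟨hn01, hn0N⟩,
      q, r, ?_⟩
    unfold zpt
    rw [csum_mul d M hM hdper, csum_mul u N hN huper,
      csum_of_mem d m0 hm01, csum_of_mem u n0 hn01]
    abel
  · rintro ⟨m, hm, n, hn, q, r, rfl⟩
    simp only [Finset.mem_Icc] at hm hn
    refine ⟨m + r * M, n + q * N, ?_⟩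
    unfold zpt
    rw [csum_mul d M hM hdper, csum_mul u N hN huper,
      csum_of_mem d m hm.1, csum_of_mem u n hn.1]
    abel
end

section
/- On the cylinder, the projected left parastichies of a phyllotactic tiling π({z_{m,k} : k ∈ ℤ}) and π({z_{i,k} : k ∈ ℤ}) are equal if and only if i ≡ m (mod M); consequently there are exactly M distinct left parastichies. -/
lemma Icc_succ_Ioc (a b : ℤ) : Finset.Icc (a + 1) b = Finset.Ioc a b := by
  ext x; simp

lemma sumIoc_cat (d : ℤ → ℝ × ℝ) {a b c : ℤ} (h1 : a ≤ b) (h2 : b ≤ c) :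
    (∑ j ∈ Finset.Ioc a b, d j) + (∑ j ∈ Finset.Ioc b c, d j) = ∑ j ∈ Finset.Ioc a c, d j := by
  rw [← Finset.sum_union, Finset.Ioc_union_Ioc_eq_Ioc h1 h2]
  rw [Finset.disjoint_left]
  intro x hx hx'
  simp only [Finset.mem_Ioc] at hx hx'
  omega

lemma csum_eq (d : ℤ → ℝ × ℝ) (m : ℤ) :
    csum d m = (∑ j ∈ Finset.Ioc 0 m, d j) - (∑ j ∈ Finset.Ioc m 0, d j) := by
  rw [csum, ← Icc_succ_Ioc, ← Icc_succ_Ioc]; norm_num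

lemma csum_sub (d : ℤ → ℝ × ℝ) {m n : ℤ} (h : m ≤ n) :
    csum d n - csum d m = ∑ j ∈ Finset.Ioc m n, d j := by
  rw [csum_eq, csum_eq]
  rcases le_or_gt 0 m with hm | hm
  · have e1 : Finset.Ioc n 0 = ∅ := Finset.Ioc_eq_empty (by omega)
    have e2 : Finset.Ioc m 0 = ∅ := Finset.Ioc_eq_empty (by omega)
    rw [e1, e2, ← sumIoc_cat d hm h]
    simp
  rcases le_or_gt n 0 with hn | hn
  · have e1 : Finset.Ioc 0 n = ∅ := Finset.Ioc_eq_empty (by omega)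
    have e2 : Finset.Ioc 0 m = ∅ := Finset.Ioc_eq_empty (by omega)
    rw [e1, e2, ← sumIoc_cat d h hn]
    simp
  · have e1 : Finset.Ioc n 0 = ∅ := Finset.Ioc_eq_empty (by omega)
    have e2 : Finset.Ioc 0 m = ∅ := Finset.Ioc_eq_empty (by omega)
    rw [e1, e2, ← sumIoc_cat d hm.le hn.le]
    simp; abel

lemma Ioc_succ_singleton (a : ℤ) : Finset.Ioc a (a + 1) = {a + 1} := by
  ext x; simp; omega

lemma sum_Ioc_per (d : ℤ → ℝ × ℝ) (M : ℕ) (hper : ∀ j : ℤ, d (j + M) = d j) (m : ℤ) :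
    ∑ j ∈ Finset.Ioc m (m + M), d j = ∑ j ∈ Finset.Ioc 0 (M : ℤ), d j := by
  induction m using Int.induction_on with
  | zero => simp
  | succ k ih =>
      have h1 : (k : ℤ) ≤ k + 1 := by omega
      have h2 : (k : ℤ) + 1 ≤ k + 1 + M := by omega
      have h3 : (k : ℤ) + M ≤ k + 1 + M := by omega
      have h4 : (k : ℤ) ≤ k + M := by omega
      have e1 := sumIoc_cat d h1 h2
      have e2 := sumIoc_cat d h4 h3
      have e3 : (k : ℤ) + 1 + M = (k + M) + 1 := by ring
      rw [e3] at e1 e2 ⊢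
      rw [Ioc_succ_singleton, Finset.sum_singleton] at e1 e2
      have e4 : d ((k : ℤ) + M + 1) = d (k + 1) := by
        have := hper (k + 1); rw [← this]; ring_nf
      rw [e4] at e2
      have h := e1.trans e2.symm
      rw [add_comm (∑ j ∈ Finset.Ioc (k : ℤ) (k + M), d j)] at h
      rw [← ih]
      exact add_left_cancel h
  | pred k ih =>
      have h1 : (-k : ℤ) - 1 ≤ -k := by omega
      have h2 : (-k : ℤ) ≤ -k + M := by omega
      have h3 : (-k : ℤ) - 1 ≤ -k - 1 + M := by omega
      have h4 : (-k : ℤ) - 1 + M ≤ -k + M := by omega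
      have e1 := sumIoc_cat d h1 h2
      have e2 := sumIoc_cat d h3 h4
      have e3 : (-k : ℤ) - 1 + 1 = -k := by ring
      have e4 : (-k : ℤ) - 1 + M + 1 = -k + M := by ring
      have s1 : Finset.Ioc ((-k : ℤ) - 1) (-k) = {(-k : ℤ)} := by
        have := Ioc_succ_singleton ((-k : ℤ) - 1); rw [e3] at this; exact this
      have s2 : Finset.Ioc ((-k : ℤ) - 1 + M) (-k + M) = {(-k : ℤ) + M} := by
        ext x; simp; omega
      rw [s1, Finset.sum_singleton] at e1
      rw [s2, Finset.sum_singleton] at e2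
      have e5 : d ((-k : ℤ) + M) = d (-k) := hper (-k)
      rw [e5] at e2
      have h := e2.trans e1.symm
      rw [add_comm (∑ j ∈ Finset.Ioc ((-k : ℤ) - 1) (-k - 1 + M), d j)] at h
      rw [← ih]
      exact add_left_cancel h

lemma csum_add_nat (d : ℤ → ℝ × ℝ) (M : ℕ) (hper : ∀ j : ℤ, d (j + M) = d j) (m : ℤ) :
    csum d (m + M) = csum d m + ∑ j ∈ Finset.Ioc 0 (M : ℤ), d j := by
  have h := csum_sub d (show m ≤ m + M by omega)
  rw [sum_Ioc_per d M hper m] at h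
  linear_combination (norm := abel) h

lemma csum_add_mul (d : ℤ → ℝ × ℝ) (M : ℕ) (hper : ∀ j : ℤ, d (j + M) = d j) (m t : ℤ) :
    csum d (m + t * M) = csum d m + t • (∑ j ∈ Finset.Ioc 0 (M : ℤ), d j) := by
  induction t using Int.induction_on with
  | zero => simp
  | succ k ih =>
      have e : m + ((k : ℤ) + 1) * M = (m + k * M) + M := by ring
      rw [e, csum_add_nat d M hper, ih, add_smul, one_smul]; abel
  | pred k ih =>
      have e : m + (-(k : ℤ)) * M = (m + (-k - 1) * M) + M := by ring
      rw [e, csum_add_nat d M hper] at ih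
      have : csum d (m + (-(k:ℤ) - 1) * M) = csum d m + (-(k:ℤ)) • (∑ j ∈ Finset.Ioc 0 (M : ℤ), d j) - (∑ j ∈ Finset.Ioc 0 (M : ℤ), d j) := by
        rw [← ih]; abel
      rw [this, sub_smul, one_smul]; abel

section main
variable {M N : ℕ} {a b : ℝ} {d u : ℤ → ℝ × ℝ}

lemma csum_mono_d (hd : ∀ j : ℤ, 0 ≤ (d j).1 ∧ (d j).2 < 0) {m n : ℤ} (h : m < n) :
    (csum d m).1 ≤ (csum d n).1 ∧ (csum d n).2 < (csum d m).2 := by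
  have e := csum_sub d h.le
  have e1 : (csum d n).1 - (csum d m).1 = ∑ j ∈ Finset.Ioc m n, (d j).1 := by
    rw [← Prod.fst_sum, ← e]; simp
  have e2 : (csum d n).2 - (csum d m).2 = ∑ j ∈ Finset.Ioc m n, (d j).2 := by
    rw [← Prod.snd_sum, ← e]; simp
  have hne : (Finset.Ioc m n).Nonempty := by
    rw [Finset.nonempty_Ioc]; exact h
  constructor
  · nlinarith [e1, Finset.sum_nonneg (s := Finset.Ioc m n) (fun j _ => (hd j).1)]
  · have : ∑ j ∈ Finset.Ioc m n, (d j).2 < 0 := by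
      apply Finset.sum_neg (fun j _ => (hd j).2) hne
    linarith
  
lemma csum_mono_u (hu : ∀ i : ℤ, 0 < (u i).1 ∧ 0 ≤ (u i).2) {m n : ℤ} (h : m < n) :
    (csum u m).1 < (csum u n).1 ∧ (csum u m).2 ≤ (csum u n).2 := by
  have e := csum_sub u h.le
  have e1 : (csum u n).1 - (csum u m).1 = ∑ j ∈ Finset.Ioc m n, (u j).1 := by
    rw [← Prod.fst_sum, ← e]; simp
  have e2 : (csum u n).2 - (csum u m).2 = ∑ j ∈ Finset.Ioc m n, (u j).2 := by
    rw [← Prod.snd_sum, ← e]; simp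
  have hne : (Finset.Ioc m n).Nonempty := by
    rw [Finset.nonempty_Ioc]; exact h
  constructor
  · have : 0 < ∑ j ∈ Finset.Ioc m n, (u j).1 := Finset.sum_pos (fun j _ => (hu j).1) hne
    linarith
  · nlinarith [e2, Finset.sum_nonneg (s := Finset.Ioc m n) (fun j _ => (hu j).2)]

lemma zpt_inj (hd : ∀ j : ℤ, 0 ≤ (d j).1 ∧ (d j).2 < 0)
    (hu : ∀ i : ℤ, 0 < (u i).1 ∧ 0 ≤ (u i).2) {m n m' n' : ℤ}
    (h : zpt a b d u m n = zpt a b d u m' n') : m = m' ∧ n = n' := by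
  have key : csum d m + csum u n = csum d m' + csum u n' := by
    have := h
    unfold zpt at this
    have h1 : ((a,b) : ℝ × ℝ) + (csum d m + csum u n) = ((a,b) : ℝ × ℝ) + (csum d m' + csum u n') := by
      rw [← add_assoc, ← add_assoc]; exact this
    exact add_left_cancel h1
  have k1 : (csum d m).1 + (csum u n).1 = (csum d m').1 + (csum u n').1 := congrArg Prod.fst key
  have k2 : (csum d m).2 + (csum u n).2 = (csum d m').2 + (csum u n').2 := congrArg Prod.snd key
  have main : ∀ m n m' n' : ℤ,
      (csum d m).1 + (csum u n).1 = (csum d m').1 + (csum u n').1 →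
      (csum d m).2 + (csum u n).2 = (csum d m').2 + (csum u n').2 → ¬ (m < m') := by
    intro m n m' n' k1 k2 hlt
    have hdm := csum_mono_d hd hlt
    have hn' : n < n' := by
      by_contra hc
      push_neg at hc
      rcases eq_or_lt_of_le hc with rfl | hc
      · linarith [hdm.2]
      · linarith [(csum_mono_u hu hc).2, hdm.2]
    linarith [(csum_mono_u hu hn').1, hdm.1]
  have hm : m = m' := by
    rcases lt_trichotomy m m' with h | h | h
    · exact absurd h (main m n m' n' k1 k2)
    · exact h
    · exact absurd h (main m' n' m n k1.symm k2.symm)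
  subst hm
  have hn : n = n' := by
    rcases lt_trichotomy n n' with h | h | h
    · linarith [(csum_mono_u hu h).1]
    · exact h
    · linarith [(csum_mono_u hu h).1]
  exact ⟨rfl, hn⟩

end main

lemma pii_add_int (p : ℝ × ℝ) (t : ℤ) : pii (p + ((t : ℝ), 0)) = pii p := by
  unfold pii
  refine Prod.ext ?_ (by simp)
  simp only [Prod.fst_add]
  rw [QuotientAddGroup.eq_iff_sub_mem]
  simp only [add_sub_cancel_left]
  exact AddSubgroup.intCast_mem_zmultiples_one t

lemma pii_eq_elim {p q : ℝ × ℝ} (h : pii p = pii q) : ∃ t : ℤ, p = q + ((t : ℝ), 0) := by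
  unfold pii at h
  rw [Prod.ext_iff] at h
  obtain ⟨h1, h2⟩ := h
  simp only at h1 h2
  rw [QuotientAddGroup.eq_iff_sub_mem, AddSubgroup.mem_zmultiples_iff] at h1
  obtain ⟨t, ht⟩ := h1
  refine ⟨t, Prod.ext ?_ (by simpa using h2)⟩
  simp only [Prod.fst_add]
  have : (t : ℝ) = p.1 - q.1 := by simpa [zsmul_eq_mul] using ht
  linarith

section main2
variable {M N : ℕ} {a b : ℝ} {d u : ℤ → ℝ × ℝ}

lemma zpt_shift (hdper : ∀ j : ℤ, d (j + M) = d j) (huper : ∀ i : ℤ, u (i + N) = u i)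
    (hsum : (∑ j ∈ Finset.Icc (1 : ℤ) (M : ℤ), d j)
        + (∑ i ∈ Finset.Icc (1 : ℤ) (N : ℤ), u i) = ((1 : ℝ), (0 : ℝ)))
    (m n t : ℤ) :
    zpt a b d u (m + t * M) (n + t * N) = zpt a b d u m n + ((t : ℝ), 0) := by
  have hsum' : (∑ j ∈ Finset.Ioc (0 : ℤ) (M : ℤ), d j)
      + (∑ i ∈ Finset.Ioc (0 : ℤ) (N : ℤ), u i) = ((1 : ℝ), (0 : ℝ)) := by
    rw [← Icc_succ_Ioc, ← Icc_succ_Ioc]; norm_num [hsum]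
  unfold zpt
  rw [csum_add_mul d M hdper, csum_add_mul u N huper]
  have e : t • (∑ j ∈ Finset.Ioc (0 : ℤ) (M : ℤ), d j)
      + t • (∑ i ∈ Finset.Ioc (0 : ℤ) (N : ℤ), u i) = ((t : ℝ), 0) := by
    rw [← smul_add, hsum']
    simp [Prod.smul_mk, zsmul_eq_mul]
  rw [← e]; abel

end main2

/-- On the cylinder, the projected left parastichies `π({z m k})` and
`π({z i k})` are equal iff `i ≡ m (mod M)`; consequently there are exactly
`M` distinct left parastichies. -/
theorem projected_left_parastichies
    (M N : ℕ) (hM : 0 < M) (hN : 0 < N) (a b : ℝ) (d u : ℤ → ℝ × ℝ)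
    (hdper : ∀ j : ℤ, d (j + M) = d j) (huper : ∀ i : ℤ, u (i + N) = u i)
    (hd : ∀ j : ℤ, 0 ≤ (d j).1 ∧ (d j).2 < 0)
    (hu : ∀ i : ℤ, 0 < (u i).1 ∧ 0 ≤ (u i).2)
    (hsum : (∑ j ∈ Finset.Icc (1 : ℤ) (M : ℤ), d j)
        + (∑ i ∈ Finset.Icc (1 : ℤ) (N : ℤ), u i) = ((1 : ℝ), (0 : ℝ))) :
    (∀ m i : ℤ,
        pii '' {p : ℝ × ℝ | ∃ k : ℤ, p = zpt a b d u m k}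
            = pii '' {p : ℝ × ℝ | ∃ k : ℤ, p = zpt a b d u i k}
          ↔ (M : ℤ) ∣ (m - i)) ∧
    {S : Set (AddCircle (1 : ℝ) × ℝ) |
        ∃ m : ℤ, S = pii '' {p : ℝ × ℝ | ∃ k : ℤ, p = zpt a b d u m k}}.ncard = M := by
  have incl : ∀ m i t : ℤ, m = i + t * M →
      pii '' {p : ℝ × ℝ | ∃ k : ℤ, p = zpt a b d u m k}
        ⊆ pii '' {p : ℝ × ℝ | ∃ k : ℤ, p = zpt a b d u i k} := by
    rintro m i t hmi x ⟨p, ⟨k, rfl⟩, rfl⟩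
    obtain ⟨k', rfl⟩ : ∃ k', k = k' + t * N := ⟨k - t * N, by ring⟩
    refine ⟨zpt a b d u i k', ⟨k', rfl⟩, ?_⟩
    rw [hmi, zpt_shift hdper huper hsum, pii_add_int]
  have hiff : ∀ m i : ℤ,
      pii '' {p : ℝ × ℝ | ∃ k : ℤ, p = zpt a b d u m k}
          = pii '' {p : ℝ × ℝ | ∃ k : ℤ, p = zpt a b d u i k}
        ↔ (M : ℤ) ∣ (m - i) := by
    intro m i
    constructor
    · intro h
      have hmem : pii (zpt a b d u m 0)
          ∈ pii '' {p : ℝ × ℝ | ∃ k : ℤ, p = zpt a b d u m k} :=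
        ⟨zpt a b d u m 0, ⟨0, rfl⟩, rfl⟩
      rw [h] at hmem
      obtain ⟨p, ⟨k, rfl⟩, hp⟩ := hmem
      obtain ⟨t, ht⟩ := pii_eq_elim hp
      rw [← zpt_shift hdper huper hsum m 0 t] at ht
      obtain ⟨h1, h2⟩ := zpt_inj hd hu ht
      exact ⟨-t, by rw [h1]; ring⟩
    · rintro ⟨t, ht⟩
      exact subset_antisymm (incl m i t (by linear_combination ht))
        (incl i m (-t) (by linear_combination -ht))
  refine ⟨hiff, ?_⟩
  have hMZ : (0 : ℤ) < M := by exact_mod_cast hM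
  set f : ℤ → Set (AddCircle (1 : ℝ) × ℝ) :=
    fun m => pii '' {p : ℝ × ℝ | ∃ k : ℤ, p = zpt a b d u m k} with hf
  have hset : {S : Set (AddCircle (1 : ℝ) × ℝ) | ∃ m : ℤ, S = f m}
      = Set.range (fun r : Fin M => f (r : ℤ)) := by
    ext S
    simp only [Set.mem_setOf_eq, Set.mem_range]
    constructor
    · rintro ⟨m, rfl⟩
      have h0 : (0 : ℤ) ≤ m % M := Int.emod_nonneg m hMZ.ne'
      have h1 : m % M < M := Int.emod_lt_of_pos m hMZ
      refine ⟨⟨(m % M).toNat, by omega⟩, ?_⟩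
      have hco : (((m % M).toNat : ℕ) : ℤ) = m % M := Int.toNat_of_nonneg h0
      show f ((m % M).toNat : ℤ) = f m
      apply (hiff _ _).mpr
      exact ⟨-(m / M), by rw [hco]; linear_combination Int.mul_ediv_add_emod m M⟩
    · rintro ⟨r, rfl⟩
      exact ⟨(r : ℤ), rfl⟩
  have hinj : Function.Injective (fun r : Fin M => f (r : ℤ)) := by
    intro r r' h
    have hdvd : (M : ℤ) ∣ ((r : ℤ) - (r' : ℤ)) := (hiff _ _).mp h
    have h1 : (r : ℤ) < M := by exact_mod_cast r.isLt
    have h2 : (r' : ℤ) < M := by exact_mod_cast r'.isLt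
    have h0 : (r : ℤ) - r' = 0 := by
      apply Int.eq_zero_of_abs_lt_dvd hdvd
      rw [abs_sub_lt_iff]
      constructor <;> omega
    have : (r : ℤ) = r' := by omega
    exact Fin.ext (by exact_mod_cast this)
  rw [hset, ← Set.image_univ, Set.ncard_image_of_injective _ hinj, Set.ncard_univ]
  simp
end
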